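/- Let ∼₁ and ∼₂ be equivalence relations on {1, ..., n}, let P₁ and P₂ be the groups of permutations of {1, ..., n} preserving the equivalence classes of ∼₁ and ∼₂ respectively, and for an n×n complex matrix A set f_{∼₁,∼₂}(A) = ∑_{σ₁ ∈ P₁} ∑_{σ₂ ∈ P₂} ∏_{i=1}^n A_{σ₁(i), σ₂(i)}. If ∼₁ is the discrete equivalence relation (i ∼₁ j iff i = j) and ∼₂ is the indiscrete one (i ∼₂ j for all i, j), then for every Hermitian positive semidefinite A one has Re(f_{∼₁,∼₂}(A)) ≥ |P₁ ∩ P₂| · ∏_{i=1}^n Re(A_{i i}); that is, Conjecture D holds in this case, where it recovers Marcus's permanent inequality. -/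

import Mathlib

open Matrix Finset
open scoped ComplexOrder Classical

noncomputable section

/-- Given an equivalence relation `r` on `Fin n`, the set of permutations of `Fin n`
preserving each equivalence class of `r`. -/
def classPerms (n : ℕ) (r : Setoid (Fin n)) : Finset (Equiv.Perm (Fin n)) :=
  Finset.univ.filter fun σ => ∀ i, r.r (σ i) i

/-- The function `f_{∼₁,∼₂}(A) = ∑_{σ₁ ∈ P₁} ∑_{σ₂ ∈ P₂} ∏_i A_{σ₁(i), σ₂(i)}`. -/
def fRel (n : ℕ) (r₁ r₂ : Setoid (Fin n)) (A : Matrix (Fin n) (Fin n) ℂ) : ℂ :=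
  ∑ σ₁ ∈ classPerms n r₁, ∑ σ₂ ∈ classPerms n r₂, ∏ i : Fin n, A (σ₁ i) (σ₂ i)

/-!
Marcus's inequality `∏ i, A i i ≤ per A` for positive semidefinite `A` goes by induction on the
size. Expanding the permanent along the first row and column gives
`per A = a₀₀ per A' + ∑ j k, conj cⱼ cₖ per A'(j|k)`, where `A'` is the trailing block,
`cₖ = a₀,ₖ₊₁` and `A'(j|k)` are the permanental minors of `A'`. The cross term is nonnegative
because these minors form a Gram matrix. Indeed `∑ g, conj (per V_g) per W_g = n! per (V* W)`,
where `V_g` consists of the rows `g` of `V`, i.e. `per V_g` is a coordinate of the symmetrized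
tensor product of the columns of `V`. Writing `A' = B* B`, adjoin a new coordinate and let `Bⱼ` be
`B` with its `j`-th column replaced by the unit vector in that coordinate: then `Bⱼ* Bₖ` is `A'`
with row `j` and column `k` replaced by unit vectors, whose permanent is `per A'(j|k)`.
-/

namespace Matrix

open Equiv

variable {ι κ R : Type*} [DecidableEq ι] [CommSemiring R]

section Permanent

variable [Fintype ι]

/-- The permanent of `M` with row `j` and column `k` deleted; the permutations `σ` with `σ k = j`
stand for the bijections from `ι \ {k}` onto `ι \ {j}`. -/
def permanentMinor (M : Matrix ι ι R) (j k : ι) : R :=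
  ∑ σ : Perm ι with σ k = j, ∏ i ∈ univ.erase k, M (σ i) i

theorem permanent_updateCol_updateRow_single (M : Matrix ι ι R) (j k : ι) :
    ((M.updateRow j (Pi.single k 1)).updateCol k (Pi.single j 1)).permanent =
      M.permanentMinor j k := by
  rw [permanent, permanentMinor, sum_filter]
  refine sum_congr rfl fun σ _ => ?_
  rw [← mul_prod_erase univ _ (mem_univ k)]
  by_cases hσ : σ k = j
  · rw [if_pos hσ, updateCol_self, hσ, Pi.single_eq_same, one_mul]
    refine prod_congr rfl fun i hi => ?_
    have hik : i ≠ k := ne_of_mem_erase hi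
    have hσi : σ i ≠ j := fun h => hik (σ.injective (h.trans hσ.symm))
    rw [updateCol_ne hik, updateRow_ne hσi]
  · rw [if_neg hσ, updateCol_self, Pi.single_eq_of_ne hσ, zero_mul]

theorem permanent_succ_eq_mul_permanent_add_sum_permanentMinor {n : ℕ}
    (A : Matrix (Fin (n + 1)) (Fin (n + 1)) R) :
    A.permanent = A 0 0 * (A.submatrix Fin.succ Fin.succ).permanent +
      ∑ j, ∑ k, A j.succ 0 * A 0 k.succ * (A.submatrix Fin.succ Fin.succ).permanentMinor j k := by
  rw [permanent, ← Equiv.sum_comp Perm.decomposeFin.symm, Fintype.sum_prod_type,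
    Fin.sum_univ_succ]
  congr 1
  · rw [permanent, mul_sum]
    refine sum_congr rfl fun e _ => ?_
    simp [Fin.prod_univ_succ, Perm.decomposeFin_symm_apply_succ]
  · refine sum_congr rfl fun j _ => ?_
    simp only [permanentMinor, mul_sum]
    rw [← sum_fiberwise univ (fun e : Perm (Fin n) => e.symm j)]
    refine sum_congr rfl fun k _ => sum_congr ?_ fun e he => ?_
    · exact filter_congr fun e _ => e.symm_apply_eq.trans eq_comm
    have hek : e k = j := (mem_filter.mp he).2
    rw [Fin.prod_univ_succ, Perm.decomposeFin_symm_apply_zero,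
      ← mul_prod_erase univ _ (mem_univ k), Perm.decomposeFin_symm_apply_succ, hek,
      swap_apply_right, mul_assoc]
    congr 2
    refine prod_congr rfl fun i hi => ?_
    have hei : e i ≠ j := fun h => ne_of_mem_erase hi (e.injective (h.trans hek.symm))
    rw [Perm.decomposeFin_symm_apply_succ, swap_apply_of_ne_of_ne (Fin.succ_ne_zero _)
      (Fin.succ_injective _ |>.ne hei)]
    rfl

theorem permanent_eq_sum_prod_comp_perm (M : Matrix ι ι R) (ρ : Perm ι) :
    M.permanent = ∑ π : Perm ι, ∏ s, M (π s) (ρ s) := by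
  refine (Fintype.sum_equiv (Equiv.mulRight ρ⁻¹) _ _ fun π => ?_).symm
  rw [← Equiv.prod_comp ρ.symm]
  simp [Perm.mul_apply]

theorem sum_star_permanent_mul_permanent_submatrix [StarRing R] [Fintype κ]
    (V W : Matrix κ ι R) :
    ∑ g : ι → κ, star (V.submatrix g id).permanent * (W.submatrix g id).permanent =
      (Fintype.card ι).factorial * (Vᴴ * W).permanent := by
  have hper (U : Matrix κ ι R) (g : ι → κ) :
      (U.submatrix g id).permanent = ∑ π : Perm ι, ∏ s, U (g s) (π s) := by
    rw [← permanent_transpose]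
    rfl
  calc ∑ g : ι → κ, star (V.submatrix g id).permanent * (W.submatrix g id).permanent
      = ∑ g : ι → κ, ∑ π : Perm ι, ∑ ρ : Perm ι,
          ∏ s, star (V (g s) (π s)) * W (g s) (ρ s) := by
        simp only [hper, star_sum, star_prod, sum_mul_sum, prod_mul_distrib]
    _ = ∑ π : Perm ι, ∑ ρ : Perm ι, ∏ s, (Vᴴ * W) (π s) (ρ s) := by
        simp only [mul_apply, conjTranspose_apply, Fintype.prod_sum]
        rw [sum_comm]
        exact sum_congr rfl fun π _ => sum_comm
    _ = (Fintype.card ι).factorial * (Vᴴ * W).permanent := by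
        rw [sum_comm]
        simp only [← permanent_eq_sum_prod_comp_perm, sum_const, card_univ, Fintype.card_perm,
          nsmul_eq_mul]

end Permanent

def adjoinUnitCol (B : Matrix κ ι R) (j : ι) : Matrix (Option κ) ι R :=
  updateCol (of fun h i => h.elim 0 (B · i)) j (Pi.single none 1)

theorem conjTranspose_adjoinUnitCol_mul_adjoinUnitCol [StarRing R] [Fintype κ]
    (B : Matrix κ ι R) (j k : ι) :
    (B.adjoinUnitCol j)ᴴ * B.adjoinUnitCol k =
      ((Bᴴ * B).updateRow j (Pi.single k 1)).updateCol k (Pi.single j 1) := by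
  ext a b
  by_cases ha : a = j <;> by_cases hb : b = k <;>
    simp [adjoinUnitCol, mul_apply, Fintype.sum_option, updateRow_apply, ha, hb]

variable [Fintype ι]

theorem factorial_mul_permanentMinor_conjTranspose_mul_self [StarRing R] [Fintype κ]
    (B : Matrix κ ι R) (j k : ι) :
    (Fintype.card ι).factorial * (Bᴴ * B).permanentMinor j k =
      ∑ g : ι → Option κ, star ((B.adjoinUnitCol j).submatrix g id).permanent *
        ((B.adjoinUnitCol k).submatrix g id).permanent := by
  rw [sum_star_permanent_mul_permanent_submatrix, conjTranspose_adjoinUnitCol_mul_adjoinUnitCol,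
    permanent_updateCol_updateRow_single]

theorem PosSemidef.sum_star_mul_permanentMinor_nonneg {M : Matrix ι ι ℂ} (hM : M.PosSemidef)
    (c : ι → ℂ) : 0 ≤ ∑ j, ∑ k, star (c j) * c k * M.permanentMinor j k := by
  obtain ⟨B, rfl⟩ : ∃ B : Matrix ι ι ℂ, M = Bᴴ * B := by
    open scoped MatrixOrder in
    exact CStarAlgebra.nonneg_iff_eq_star_mul_self.mp hM.nonneg
  set P : ι → (ι → Option ι) → ℂ := fun k g => ((B.adjoinUnitCol k).submatrix g id).permanent
  set x : (ι → Option ι) → ℂ := fun g => ∑ k, c k * P k g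
  have hx : (Fintype.card ι).factorial *
      ∑ j, ∑ k, star (c j) * c k * (Bᴴ * B).permanentMinor j k = ∑ g, star (x g) * x g :=
    calc _ = ∑ j, ∑ k, star (c j) * c k *
            (((Fintype.card ι).factorial : ℂ) * (Bᴴ * B).permanentMinor j k) := by
          simp only [mul_sum]
          exact sum_congr rfl fun j _ => sum_congr rfl fun k _ => by ring
      _ = ∑ g, ∑ j, ∑ k, star (c j * P j g) * (c k * P k g) := by
          simp only [factorial_mul_permanentMinor_conjTranspose_mul_self, mul_sum]
          conv_rhs => rw [sum_comm]
          refine sum_congr rfl fun j _ => ?_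
          conv_rhs => rw [sum_comm]
          refine sum_congr rfl fun k _ => sum_congr rfl fun g _ => ?_
          rw [star_mul']
          ring
      _ = ∑ g, star (x g) * x g := by
          simp only [x, star_sum, sum_mul_sum]
  have hfac : (0 : ℂ) < (Fintype.card ι).factorial := by exact_mod_cast Nat.factorial_pos _
  refine le_of_mul_le_mul_left ?_ hfac
  rw [mul_zero, hx]
  exact sum_nonneg fun g _ => star_mul_self_nonneg (x g)

theorem PosSemidef.prod_diag_le_permanent {n : ℕ} {A : Matrix (Fin n) (Fin n) ℂ}
    (hA : A.PosSemidef) : ∏ i, A i i ≤ A.permanent := by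
  induction n with
  | zero => simp [permanent_isEmpty]
  | succ n ih =>
    set A' := A.submatrix Fin.succ Fin.succ
    have hcross : 0 ≤ ∑ j, ∑ k, A j.succ 0 * A 0 k.succ * A'.permanentMinor j k := by
      simpa only [hA.1.apply] using
        (hA.submatrix Fin.succ).sum_star_mul_permanentMinor_nonneg fun k => A 0 k.succ
    calc ∏ i, A i i = A 0 0 * ∏ i, A' i i := Fin.prod_univ_succ _
      _ ≤ A 0 0 * A'.permanent := mul_le_mul_of_nonneg_left (ih (hA.submatrix _)) hA.diag_nonneg
      _ ≤ A.permanent := by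
        rw [permanent_succ_eq_mul_permanent_add_sum_permanentMinor]
        exact le_add_of_nonneg_right hcross

theorem PosSemidef.prod_re_diag_le_re_permanent {n : ℕ} {A : Matrix (Fin n) (Fin n) ℂ}
    (hA : A.PosSemidef) : ∏ i, (A i i).re ≤ A.permanent.re := by
  have hdiag : ∏ i, A i i = ((∏ i, (A i i).re : ℝ) : ℂ) := by
    rw [Complex.ofReal_prod]
    exact prod_congr rfl fun i _ => (congrFun hA.1.coe_re_diag i).symm
  have hle := (Complex.le_def.mp hA.prod_diag_le_permanent).1
  rwa [hdiag, Complex.ofReal_re] at hle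

end Matrix

/-- Conjecture D holds when `∼₁` is the discrete equivalence relation and `∼₂` the
indiscrete one: for every Hermitian positive semidefinite `A`,
`Re(f_{∼₁,∼₂}(A)) ≥ |P₁ ∩ P₂| ⬝ ∏_i Re(A_{i i})` (Marcus's permanent inequality). -/
theorem conjectureD_discrete_indiscrete (n : ℕ) (r₁ r₂ : Setoid (Fin n))
    (h₁ : ∀ i j : Fin n, r₁.r i j ↔ i = j) (h₂ : ∀ i j : Fin n, r₂.r i j)
    (A : Matrix (Fin n) (Fin n) ℂ) (hA : A.PosSemidef) :
    (fRel n r₁ r₂ A).re ≥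
      ((classPerms n r₁ ∩ classPerms n r₂).card : ℝ) * ∏ i : Fin n, (A i i).re := by
  have hP₁ : classPerms n r₁ = {1} := by
    ext σ
    simp [classPerms, h₁, Equiv.ext_iff]
  have hP₂ : classPerms n r₂ = univ := by
    ext σ
    simp [classPerms, h₂]
  have hf : fRel n r₁ r₂ A = A.permanent := by
    rw [fRel, hP₁, hP₂, sum_singleton, ← permanent_transpose]
    rfl
  rw [hf, hP₁, hP₂, inter_univ, card_singleton, Nat.cast_one, one_mul]
  exact hA.prod_re_diag_le_re_permanent
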